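/- Define Dave's projectors on ℂ^d_D ⊗ (ℂ²_{v₁}⊗ℂ²_{v₂}⊗ℂ²_{v₃}): M₅,₁ = P_D{1,…,d−1}⊗|1⟩⟨1|_{v₁}⊗|1⟩⟨1|_{v₂}⊗|0⟩⟨0|_{v₃}; M₅,₂ = P_D{1,…,d−1}⊗|1⟩⟨1|_{v₁}⊗|0⟩⟨0|_{v₂}⊗|1⟩⟨1|_{v₃}; M₅,₃ = |0⟩⟨0|_D⊗I_{v₁}⊗I_{v₂}⊗|1⟩⟨1|_{v₃}; M₅,₄ = |0⟩⟨0|_D⊗I_{v₁}⊗|1⟩⟨1|_{v₂}⊗|0⟩⟨0|_{v₃}; M₅,₅ = I − M₅,₁ − M₅,₂ − M₅,₃ − M₅,₄, where P_D{1,…,d−1} = Σ_{k=1}^{d−1}|k⟩⟨k|_D. Then, tensored with the identity on all other factors and restricted to post-measurement states arising from the six subsets H₁, H₂, H₅, H₇, H₈, H₁₀: M₅,₁ acts as the identity on every post-measurement state arising from H₁₀; M₅,₂ on those from H₈; M₅,₃ on those from H₁; M₅,₄ on those from H₂; and M₅,₅ on those from H₅ and from H₇. (Step 3 of the proof of Theorem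 9: Dave's measurement identifies H₁₀, H₈, H₁, H₂.) -/

import Mathlib

/-!
All operators involved are diagonal in the computational basis, so a diagonal projector
fixes a vector as soon as its defining condition holds on the support of the vector. On the
support of a post-measurement state, the GHZ ancillas together with `Q_{Aa}, Q_{Bb}, Q_{Cc}`
force Dave's qubit `vⱼ` to be `0` exactly when the `j`-th of `A, B, C` is in `|0⟩`. Reading
the supports of the states of `H₁₀, H₈, H₁, H₂` off their tensor factors then gives the
conditions defining `M₅,₁, …, M₅,₄`; for `H₅` and `H₇`, `A` is in `|0⟩` while `D` is not,
which excludes all four, so `M₅,₅` acts as the identity.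
-/

noncomputable section

/-- View a coefficient function as a vector of the Euclidean (Hilbert) space. -/
def ofFun {ι : Type*} [Fintype ι] (f : ι → ℂ) : EuclideanSpace ℂ ι := WithLp.toLp 2 f

/-- Transport an endomorphism of the coefficient functions to the Euclidean space. -/
def toE {ι : Type*} [Fintype ι] (T : (ι → ℂ) →ₗ[ℂ] (ι → ℂ)) :
    Module.End ℂ (EuclideanSpace ℂ ι) :=
  (WithLp.linearEquiv 2 ℂ (ι → ℂ)).symm.toLinearMap ∘ₗ T ∘ₗ
    (WithLp.linearEquiv 2 ℂ (ι → ℂ)).toLinearMap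

open Classical in
/-- Diagonal orthogonal projection keeping exactly the basis vectors whose index
satisfies `f`. -/
def diagP {ι : Type*} [Fintype ι] (f : ι → Prop) : Module.End ℂ (EuclideanSpace ℂ ι) :=
  toE (LinearMap.pi fun i => (if f i then (1 : ℂ) else 0) • LinearMap.proj i)

/-- Tensor product of two vectors, realized on the product index set. -/
def tensE {ι κ : Type*} [Fintype ι] [Fintype κ]
    (u : EuclideanSpace ℂ ι) (w : EuclideanSpace ℂ κ) : EuclideanSpace ℂ (ι × κ) :=
  ofFun fun p => u p.1 * w p.2

/-- The root of unity `ω_n = e^{2πi/n}`. -/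
def omegaC (n : ℕ) : ℂ := Complex.exp (2 * Real.pi * Complex.I / n)

/-- Computational basis vector `|k⟩` of `ℂ^d`. -/
def ketD (d k : ℕ) : EuclideanSpace ℂ (Fin d) :=
  ofFun fun u => if (u : ℕ) = k then 1 else 0

/-- The (unnormalized) vector `|α_i⟩ = Σ_{u=0}^{d−1} ω_d^{iu}|u⟩`. -/
def alphaD (d i : ℕ) : EuclideanSpace ℂ (Fin d) :=
  ofFun fun u => omegaC d ^ (i * (u : ℕ))

/-- The (unnormalized) vector `|γ_m⟩ = Σ_{u=0}^{d−2} ω_{d−1}^{mu}|u+1⟩`. -/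
def gammaD (d m : ℕ) : EuclideanSpace ℂ (Fin d) :=
  ofFun fun u => if (u : ℕ) = 0 then 0 else omegaC (d - 1) ^ (m * ((u : ℕ) - 1))

/-- Tensor product of five vectors of `ℂ^d`, realized on the index set `Fin 5 → Fin d`. -/
def tp5 {d : ℕ} (v0 v1 v2 v3 v4 : EuclideanSpace ℂ (Fin d)) :
    EuclideanSpace ℂ (Fin 5 → Fin d) :=
  ofFun fun x => v0 (x 0) * v1 (x 1) * v2 (x 2) * v3 (x 3) * v4 (x 4)

/-- The states of set (5): family `k : Fin 10` corresponds to `H_{k+1}`; the parameter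
`a` is the spectral parameter (`i ∈ ℤ_d` for `H₁,…,H₅`, `m ∈ ℤ_{d−1}` for `H₆,…,H₁₀`),
and `p` is the index of the computational basis vector `|p⟩ ∈ {|1⟩,…,|d−1⟩}`. -/
def stateOf (d : ℕ) (k : Fin 10) (a p : ℕ) : EuclideanSpace ℂ (Fin 5 → Fin d) :=
  if k = 0 then tp5 (alphaD d a) (alphaD d a) (ketD d p) (ketD d 0) (ketD d 0)
  else if k = 1 then tp5 (alphaD d a) (ketD d p) (ketD d 0) (ketD d 0) (alphaD d a)
  else if k = 2 then tp5 (ketD d p) (ketD d 0) (ketD d 0) (alphaD d a) (alphaD d a)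
  else if k = 3 then tp5 (ketD d 0) (ketD d 0) (alphaD d a) (alphaD d a) (ketD d p)
  else if k = 4 then tp5 (ketD d 0) (alphaD d a) (alphaD d a) (ketD d p) (ketD d 0)
  else if k = 5 then tp5 (gammaD d a) (ketD d 0) (ketD d p) (ketD d 0) (ketD d 1)
  else if k = 6 then tp5 (ketD d 0) (ketD d p) (ketD d 0) (ketD d 1) (gammaD d a)
  else if k = 7 then tp5 (ketD d p) (ketD d 0) (ketD d 1) (gammaD d a) (ketD d 0)
  else if k = 8 then tp5 (ketD d 0) (ketD d 1) (gammaD d a) (ketD d 0) (ketD d p)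
  else tp5 (ketD d 1) (gammaD d a) (ketD d 0) (ketD d p) (ketD d 0)

/-- Ranges of the parameters of the states of set (5). -/
def validIdx (d : ℕ) (k : Fin 10) (a p : ℕ) : Prop :=
  (if (k : ℕ) < 5 then a < d else a < d - 1) ∧ 1 ≤ p ∧ p < d

/-- The full Hilbert space: five `ℂ^d` subsystems `A,B,C,D,E` (positions `0,…,4`),
ancilla qubits `a,b,c` (first `Fin 3 → Fin 2` factor, attached to `A,B,C`),
ancilla qubits `v₁,v₂,v₃` (second factor, held by Dave),
and ancilla qubits `e₁,e₂,e₃` (third factor, held by Eve). -/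
abbrev W3 (d : ℕ) : Type :=
  EuclideanSpace ℂ
    ((Fin 5 → Fin d) × ((Fin 3 → Fin 2) × (Fin 3 → Fin 2) × (Fin 3 → Fin 2)))

/-- The ancilla state `|G⟩_{av₁e₁} ⊗ |G⟩_{bv₂e₂} ⊗ |G⟩_{cv₃e₃}`, where
`|G⟩ = (|000⟩+|111⟩)/√2`. -/
def ancG : EuclideanSpace ℂ ((Fin 3 → Fin 2) × (Fin 3 → Fin 2) × (Fin 3 → Fin 2)) :=
  ofFun fun q =>
    ∏ k : Fin 3,
      (if q.1 k = q.2.1 k ∧ q.2.1 k = q.2.2 k then (Real.sqrt 2 : ℂ)⁻¹ else 0)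

/-- The measurement projector
`Q_{Xx} = |0⟩⟨0|_X ⊗ |0⟩⟨0|_x + (Σ_{k=1}^{d−1}|k⟩⟨k|_X) ⊗ |1⟩⟨1|_x`
on the main subsystem at position `X` and its ancilla qubit at position `j`. -/
def QprojG (d : ℕ) (X : Fin 5) (j : Fin 3) : Module.End ℂ (W3 d) :=
  diagP fun q => ((q.1 X : ℕ) = 0 ∧ q.2.1 j = 0) ∨ ((q.1 X : ℕ) ≠ 0 ∧ q.2.1 j = 1)

/-- The post-measurement state
`(Q_{Aa}Q_{Bb}Q_{Cc})(|h⟩ ⊗ |G⟩_{av₁e₁} ⊗ |G⟩_{bv₂e₂} ⊗ |G⟩_{cv₃e₃})`. -/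
def postG (d : ℕ) (h : EuclideanSpace ℂ (Fin 5 → Fin d)) : W3 d :=
  (QprojG d 0 0 * QprojG d 1 1 * QprojG d 2 2) (tensE h ancG)

/-- Dave's projector `M₅,₁ = P_D{1,…,d−1} ⊗ |1⟩⟨1|_{v₁} ⊗ |1⟩⟨1|_{v₂} ⊗ |0⟩⟨0|_{v₃}`. -/
def daveM51 (d : ℕ) : Module.End ℂ (W3 d) :=
  diagP fun q => (q.1 3 : ℕ) ≠ 0 ∧ q.2.2.1 0 = 1 ∧ q.2.2.1 1 = 1 ∧ q.2.2.1 2 = 0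

/-- Dave's projector `M₅,₂ = P_D{1,…,d−1} ⊗ |1⟩⟨1|_{v₁} ⊗ |0⟩⟨0|_{v₂} ⊗ |1⟩⟨1|_{v₃}`. -/
def daveM52 (d : ℕ) : Module.End ℂ (W3 d) :=
  diagP fun q => (q.1 3 : ℕ) ≠ 0 ∧ q.2.2.1 0 = 1 ∧ q.2.2.1 1 = 0 ∧ q.2.2.1 2 = 1

/-- Dave's projector `M₅,₃ = |0⟩⟨0|_D ⊗ I_{v₁} ⊗ I_{v₂} ⊗ |1⟩⟨1|_{v₃}`. -/
def daveM53 (d : ℕ) : Module.End ℂ (W3 d) :=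
  diagP fun q => (q.1 3 : ℕ) = 0 ∧ q.2.2.1 2 = 1

/-- Dave's projector `M₅,₄ = |0⟩⟨0|_D ⊗ I_{v₁} ⊗ |1⟩⟨1|_{v₂} ⊗ |0⟩⟨0|_{v₃}`. -/
def daveM54 (d : ℕ) : Module.End ℂ (W3 d) :=
  diagP fun q => (q.1 3 : ℕ) = 0 ∧ q.2.2.1 1 = 1 ∧ q.2.2.1 2 = 0

/-- Dave's projector `M₅,₅ = I − M₅,₁ − M₅,₂ − M₅,₃ − M₅,₄`. -/
def daveM55 (d : ℕ) : Module.End ℂ (W3 d) :=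
  1 - daveM51 d - daveM52 d - daveM53 d - daveM54 d

/-- The bit that `Q_{Xx}` forces on the ancilla `x` of a subsystem in basis state `|k⟩`. -/
def ancBit {d : ℕ} (k : Fin d) : Fin 2 := if (k : ℕ) = 0 then 0 else 1

section DiagonalProjection

variable {ι : Type*} [Fintype ι]

open Classical in
lemma diagP_apply (f : ι → Prop) (v : EuclideanSpace ℂ ι) (i : ι) :
    diagP f v i = if f i then v i else 0 := by
  change (if f i then (1 : ℂ) else 0) • v i = _
  split_ifs <;> simp

lemma diagP_apply_ne_zero {f : ι → Prop} {v : EuclideanSpace ℂ ι} {i : ι}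
    (h : diagP f v i ≠ 0) : f i ∧ v i ≠ 0 := by
  classical
  rw [diagP_apply] at h
  split_ifs at h with hf
  · exact ⟨hf, h⟩
  · exact absurd rfl h

lemma diagP_eq_self {f : ι → Prop} {v : EuclideanSpace ℂ ι} (h : ∀ i, v i ≠ 0 → f i) :
    diagP f v = v := by
  classical
  ext i
  rw [diagP_apply]
  split_ifs with hf
  · rfl
  · exact (not_imp_comm.mp (h i) hf).symm

lemma diagP_eq_zero {f : ι → Prop} {v : EuclideanSpace ℂ ι} (h : ∀ i, v i ≠ 0 → ¬ f i) :
    diagP f v = 0 := by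
  classical
  ext i
  rw [diagP_apply]
  split_ifs with hf
  · exact not_imp_comm.mp (h i) (not_not.mpr hf)
  · rfl

end DiagonalProjection

lemma ketD_ne_zero {d k : ℕ} {u : Fin d} (h : ketD d k u ≠ 0) : (u : ℕ) = k := by
  by_contra hu
  exact h (by simp [ketD, ofFun, hu])

lemma gammaD_ne_zero {d m : ℕ} {u : Fin d} (h : gammaD d m u ≠ 0) : (u : ℕ) ≠ 0 := by
  rintro hu
  exact h (by simp [gammaD, ofFun, hu])

lemma tp5_ne_zero {d : ℕ} {v₀ v₁ v₂ v₃ v₄ : EuclideanSpace ℂ (Fin d)} {x : Fin 5 → Fin d}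
    (h : tp5 v₀ v₁ v₂ v₃ v₄ x ≠ 0) :
    v₀ (x 0) ≠ 0 ∧ v₁ (x 1) ≠ 0 ∧ v₂ (x 2) ≠ 0 ∧ v₃ (x 3) ≠ 0 ∧ v₄ (x 4) ≠ 0 := by
  simpa only [tp5, ofFun, PiLp.toLp_apply, ne_eq, mul_eq_zero, not_or, and_assoc] using h

lemma tensE_ancG_ne_zero {ι : Type*} [Fintype ι] {h : EuclideanSpace ℂ ι}
    {q : ι × ((Fin 3 → Fin 2) × (Fin 3 → Fin 2) × (Fin 3 → Fin 2))}
    (hq : tensE h ancG q ≠ 0) : h q.1 ≠ 0 ∧ q.2.2.1 = q.2.1 := by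
  simp only [tensE, ancG, ofFun, PiLp.toLp_apply, ne_eq, mul_eq_zero, not_or] at hq
  refine ⟨hq.1, funext fun k => ?_⟩
  have hk := Finset.prod_ne_zero_iff.mp hq.2 k (Finset.mem_univ k)
  by_contra hne
  exact hk (if_neg fun hc => hne hc.1.symm)

lemma QprojG_ne_zero {d : ℕ} {X : Fin 5} {j : Fin 3} {v : W3 d} {q}
    (h : QprojG d X j v q ≠ 0) : v q ≠ 0 ∧ q.2.1 j = ancBit (q.1 X) := by
  obtain ⟨hQ, hv⟩ := diagP_apply_ne_zero h
  refine ⟨hv, ?_⟩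
  rcases hQ with ⟨h0, hj⟩ | ⟨h0, hj⟩ <;> simp [ancBit, h0, hj]

lemma postG_ne_zero {d : ℕ} {h : EuclideanSpace ℂ (Fin 5 → Fin d)} {q}
    (hq : postG d h q ≠ 0) :
    h q.1 ≠ 0 ∧ q.2.2.1 0 = ancBit (q.1 0) ∧ q.2.2.1 1 = ancBit (q.1 1) ∧
      q.2.2.1 2 = ancBit (q.1 2) := by
  obtain ⟨hq, hA⟩ := QprojG_ne_zero hq
  obtain ⟨hq, hB⟩ := QprojG_ne_zero hq
  obtain ⟨hq, hC⟩ := QprojG_ne_zero hq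
  obtain ⟨hh, hv⟩ := tensE_ancG_ne_zero hq
  exact ⟨hh, hv ▸ hA, hv ▸ hB, hv ▸ hC⟩

lemma daveM55_eq_self {d : ℕ} {v : W3 d}
    (h : ∀ q, v q ≠ 0 → (q.1 3 : ℕ) ≠ 0 ∧ q.2.2.1 0 = 0) : daveM55 d v = v := by
  have h51 : daveM51 d v = 0 := diagP_eq_zero fun q hq hf => by simp [(h q hq).2] at hf
  have h52 : daveM52 d v = 0 := diagP_eq_zero fun q hq hf => by simp [(h q hq).2] at hf
  have h53 : daveM53 d v = 0 := diagP_eq_zero fun q hq hf => (h q hq).1 hf.1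
  have h54 : daveM54 d v = 0 := diagP_eq_zero fun q hq hf => (h q hq).1 hf.1
  simp [daveM55, h51, h52, h53, h54]

section PostMeasurement

variable {d a p : ℕ}

lemma daveM51_postG_H10 (hp : p ≠ 0) :
    daveM51 d (postG d (tp5 (ketD d 1) (gammaD d a) (ketD d 0) (ketD d p) (ketD d 0))) =
      postG d (tp5 (ketD d 1) (gammaD d a) (ketD d 0) (ketD d p) (ketD d 0)) := by
  refine diagP_eq_self fun q hq => ?_
  obtain ⟨hx, hA, hB, hC⟩ := postG_ne_zero hq
  obtain ⟨h0, h1, h2, h3, -⟩ := tp5_ne_zero hx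
  simp [ancBit, hA, hB, hC, ketD_ne_zero h0, gammaD_ne_zero h1, ketD_ne_zero h2,
    ketD_ne_zero h3, hp]

lemma daveM52_postG_H8 (hp : p ≠ 0) :
    daveM52 d (postG d (tp5 (ketD d p) (ketD d 0) (ketD d 1) (gammaD d a) (ketD d 0))) =
      postG d (tp5 (ketD d p) (ketD d 0) (ketD d 1) (gammaD d a) (ketD d 0)) := by
  refine diagP_eq_self fun q hq => ?_
  obtain ⟨hx, hA, hB, hC⟩ := postG_ne_zero hq
  obtain ⟨h0, h1, h2, h3, -⟩ := tp5_ne_zero hx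
  simp [ancBit, hA, hB, hC, ketD_ne_zero h0, ketD_ne_zero h1, ketD_ne_zero h2,
    gammaD_ne_zero h3, hp]

lemma daveM53_postG_H1 (hp : p ≠ 0) :
    daveM53 d (postG d (tp5 (alphaD d a) (alphaD d a) (ketD d p) (ketD d 0) (ketD d 0))) =
      postG d (tp5 (alphaD d a) (alphaD d a) (ketD d p) (ketD d 0) (ketD d 0)) := by
  refine diagP_eq_self fun q hq => ?_
  obtain ⟨hx, -, -, hC⟩ := postG_ne_zero hq
  obtain ⟨-, -, h2, h3, -⟩ := tp5_ne_zero hx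
  simp [ancBit, hC, ketD_ne_zero h2, ketD_ne_zero h3, hp]

lemma daveM54_postG_H2 (hp : p ≠ 0) :
    daveM54 d (postG d (tp5 (alphaD d a) (ketD d p) (ketD d 0) (ketD d 0) (alphaD d a))) =
      postG d (tp5 (alphaD d a) (ketD d p) (ketD d 0) (ketD d 0) (alphaD d a)) := by
  refine diagP_eq_self fun q hq => ?_
  obtain ⟨hx, -, hB, hC⟩ := postG_ne_zero hq
  obtain ⟨-, h1, h2, h3, -⟩ := tp5_ne_zero hx
  simp [ancBit, hB, hC, ketD_ne_zero h1, ketD_ne_zero h2, ketD_ne_zero h3, hp]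

lemma daveM55_postG_H5 (hp : p ≠ 0) :
    daveM55 d (postG d (tp5 (ketD d 0) (alphaD d a) (alphaD d a) (ketD d p) (ketD d 0))) =
      postG d (tp5 (ketD d 0) (alphaD d a) (alphaD d a) (ketD d p) (ketD d 0)) := by
  refine daveM55_eq_self fun q hq => ?_
  obtain ⟨hx, hA, -, -⟩ := postG_ne_zero hq
  obtain ⟨h0, -, -, h3, -⟩ := tp5_ne_zero hx
  simp [ancBit, hA, ketD_ne_zero h0, ketD_ne_zero h3, hp]

lemma daveM55_postG_H7 :
    daveM55 d (postG d (tp5 (ketD d 0) (ketD d p) (ketD d 0) (ketD d 1) (gammaD d a))) =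
      postG d (tp5 (ketD d 0) (ketD d p) (ketD d 0) (ketD d 1) (gammaD d a)) := by
  refine daveM55_eq_self fun q hq => ?_
  obtain ⟨hx, hA, -, -⟩ := postG_ne_zero hq
  obtain ⟨h0, -, -, h3, -⟩ := tp5_ne_zero hx
  simp [ancBit, hA, ketD_ne_zero h0, ketD_ne_zero h3]

end PostMeasurement

theorem thm9_step3_dave_measurement_general (d : ℕ) :
    (∀ a p, validIdx d 9 a p →
      daveM51 d (postG d (stateOf d 9 a p)) = postG d (stateOf d 9 a p)) ∧
    (∀ a p, validIdx d 7 a p →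
      daveM52 d (postG d (stateOf d 7 a p)) = postG d (stateOf d 7 a p)) ∧
    (∀ a p, validIdx d 0 a p →
      daveM53 d (postG d (stateOf d 0 a p)) = postG d (stateOf d 0 a p)) ∧
    (∀ a p, validIdx d 1 a p →
      daveM54 d (postG d (stateOf d 1 a p)) = postG d (stateOf d 1 a p)) ∧
    (∀ k : Fin 10, k ∈ ({4, 6} : Set (Fin 10)) → ∀ a p, validIdx d k a p →
      daveM55 d (postG d (stateOf d k a p)) = postG d (stateOf d k a p)) := by
  refine ⟨fun a p ⟨_, hp, _⟩ => daveM51_postG_H10 (by omega),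
    fun a p ⟨_, hp, _⟩ => daveM52_postG_H8 (by omega),
    fun a p ⟨_, hp, _⟩ => daveM53_postG_H1 (by omega),
    fun a p ⟨_, hp, _⟩ => daveM54_postG_H2 (by omega), ?_⟩
  rintro k (rfl | rfl) a p ⟨_, hp, _⟩
  · exact daveM55_postG_H5 (by omega)
  · exact daveM55_postG_H7

/-- Step 3 of Theorem 9: restricted to the post-measurement states
arising from `H₁, H₂, H₅, H₇, H₈, H₁₀`: `M₅,₁` acts as the identity on those from
`H₁₀`; `M₅,₂` on those from `H₈`; `M₅,₃` on those from `H₁`; `M₅,₄` on those from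
`H₂`; and `M₅,₅` on those from `H₅` and from `H₇`. -/
theorem thm9_step3_dave_measurement (d : ℕ) (hd : 3 ≤ d) :
    (∀ a p, validIdx d 9 a p →
      daveM51 d (postG d (stateOf d 9 a p)) = postG d (stateOf d 9 a p)) ∧
    (∀ a p, validIdx d 7 a p →
      daveM52 d (postG d (stateOf d 7 a p)) = postG d (stateOf d 7 a p)) ∧
    (∀ a p, validIdx d 0 a p →
      daveM53 d (postG d (stateOf d 0 a p)) = postG d (stateOf d 0 a p)) ∧
    (∀ a p, validIdx d 1 a p →
      daveM54 d (postG d (stateOf d 1 a p)) = postG d (stateOf d 1 a p)) ∧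
    (∀ k : Fin 10, k ∈ ({4, 6} : Set (Fin 10)) → ∀ a p, validIdx d k a p →
      daveM55 d (postG d (stateOf d k a p)) = postG d (stateOf d k a p)) :=
  thm9_step3_dave_measurement_general d
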